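/- arXiv:1705.00478 — 2 statements merged into one kernel-verified Lean document; each statement's English description precedes it below -/
import Mathlib

section
/- Let T = (aY, H, t) be a timed causal space and M = M̂(T) the associated Möbius structure on S¹. An event d lies on a timelike line h_e of T if and only if the pair of events (d, e) is M-harmonic. -/
open Set
open scoped ENNReal

noncomputable section

namespace Paper

/-- The pairs `(x,y)` and `(z,u)` of points of the circle separate each other:
`z` and `u` lie in different connected components of the complement of `{x,y}`. -/
def SeparatesPts (x y z u : Circle) : Prop :=
  z ∈ ({x, y}ᶜ : Set Circle) ∧ u ∈ ({x, y}ᶜ : Set Circle) ∧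
    u ∉ connectedComponentIn ({x, y}ᶜ : Set Circle) z

/-- An event: an unordered pair of distinct points of the circle. -/
abbrev Event : Type := {e : Sym2 Circle // ¬ e.IsDiag}

/-- The underlying two-point subset of the circle of an event. -/
def EventPts (e : Event) : Set Circle := {x | x ∈ e.1}

/-- Two events separate each other as pairs of points on the circle. -/
def EventSep (a b : Event) : Prop :=
  ∃ x y z u : Circle, a.1 = s(x, y) ∧ b.1 = s(z, u) ∧ SeparatesPts x y z u

/-- Two events are in the causal relation iff they do not separate each other. -/
def Causal (a b : Event) : Prop := ¬ EventSep a b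

/-- Two events lie on a common light line iff they share a point. -/
def OnLight (a b : Event) : Prop := ∃ x : Circle, x ∈ a.1 ∧ x ∈ b.1

/-- Strong causal relation: causal and not on a common light line. -/
def StrongCausal (a b : Event) : Prop := Causal a b ∧ ¬ OnLight a b

/-- `U` is one of the two open arcs determined by the event `e`. -/
def IsOpenArc (e : Event) (U : Set Circle) : Prop :=
  ∃ z, z ∉ EventPts e ∧ U = connectedComponentIn (EventPts e)ᶜ z

/-- `a ≤ b ≤ c`: the events `a` and `c` lie in the two (closed) arcs determined
by `b` on different sides of `b`. -/
def Between (a b c : Event) : Prop :=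
  ∃ U V : Set Circle, IsOpenArc b U ∧ IsOpenArc b V ∧ U ≠ V ∧
    EventPts a ⊆ closure U ∧ EventPts c ⊆ closure V

/-- `a < b < c`. -/
def SBtw (a b c : Event) : Prop := Between a b c ∧ a ≠ b ∧ c ≠ b

/-- The event `d` is strictly between the events `a` and `c`: `a` and `c` lie in
different open arcs determined by `d`. -/
def StrictlyBetween (d a c : Event) : Prop :=
  ∃ U V : Set Circle, IsOpenArc d U ∧ IsOpenArc d V ∧ U ≠ V ∧
    EventPts a ⊆ U ∧ EventPts c ⊆ V

/-- `ω` is an infinitely remote point of the semi-metric `d`. -/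
def IsRemote (d : Circle → Circle → ℝ≥0∞) (ω : Circle) : Prop :=
  ∀ x, x ≠ ω → d x ω = ⊤

/-- A semi-metric: symmetric, vanishing exactly on the diagonal, with at most one
infinitely remote point. -/
structure IsSemiMetric (d : Circle → Circle → ℝ≥0∞) : Prop where
  symm : ∀ x y, d x y = d y x
  eq_zero_iff : ∀ x y, d x y = 0 ↔ x = y
  top_remote : ∀ x y, d x y = ⊤ → ∃ ω, IsRemote d ω ∧ (x = ω ∨ y = ω)
  remote_unique : ∀ ω ω', IsRemote d ω → IsRemote d ω' → ω = ω'

/-- The semi-metric `d` has no infinitely remote point in the set `s`. -/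
def AvoidsRemote (d : Circle → Circle → ℝ≥0∞) (s : Set Circle) : Prop :=
  ∀ ω ∈ s, ¬ IsRemote d ω

/-- Real-valued distance. -/
def dR (d : Circle → Circle → ℝ≥0∞) (x y : Circle) : ℝ := (d x y).toReal

/-- A Möbius structure on the circle: a class of pairwise Möbius equivalent
semi-metrics (same cross-ratios on nondegenerate 4-tuples), containing for each
point a semi-metric with that point infinitely remote (metric inversion). -/
structure MoebiusStructure : Type where
  sems : Set (Circle → Circle → ℝ≥0∞)
  nonempty : sems.Nonempty
  isSemiMetric : ∀ d ∈ sems, IsSemiMetric d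
  exists_remote : ∀ ω : Circle, ∃ d ∈ sems, IsRemote d ω
  compatible : ∀ d ∈ sems, ∀ d' ∈ sems, ∀ x y z u : Circle,
    x ≠ y → x ≠ z → x ≠ u → y ≠ z → y ≠ u → z ≠ u →
    AvoidsRemote d {x, y, z, u} → AvoidsRemote d' {x, y, z, u} →
    dR d x z * dR d y u * (dR d' x u * dR d' y z)
      = dR d' x z * dR d' y u * (dR d x u * dR d y z)

/-- The open balls, centered at finite points, of the semi-metrics of `D`
having infinitely remote points. -/
def mBalls (D : Set (Circle → Circle → ℝ≥0∞)) : Set (Set Circle) :=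
  {B | ∃ d ∈ D, ∃ ω : Circle, IsRemote d ω ∧ ∃ x : Circle, x ≠ ω ∧
        ∃ r : ℝ≥0∞, 0 < r ∧ B = {y | d x y < r}}

/-- Axiom (T): the `M`-topology on the circle is the standard one. -/
def AxiomT (M : MoebiusStructure) : Prop :=
  TopologicalSpace.generateFrom (mBalls M.sems)
    = (inferInstance : TopologicalSpace Circle)

/-- Axiom (M): monotonicity. -/
def AxiomM (M : MoebiusStructure) : Prop :=
  ∀ x y z u : Circle, SeparatesPts x y z u →
    ∀ d ∈ M.sems, AvoidsRemote d {x, y, z, u} →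
      max (dR d x z * dR d y u) (dR d x u * dR d y z) < dR d x y * dR d z u

/-- A monotone Möbius structure on the circle. -/
def IsMonotone (M : MoebiusStructure) : Prop := AxiomT M ∧ AxiomM M

/-- The pair of events `a = (x,y)`, `b = (z,u)` is `M`-harmonic:
`|xz|·|yu| = |xu|·|yz|`. -/
def MHarmonic (M : MoebiusStructure) (a b : Event) : Prop :=
  ∃ x y z u : Circle, a.1 = s(x, y) ∧ b.1 = s(z, u) ∧
    ∀ d ∈ M.sems, AvoidsRemote d {x, y, z, u} →
      dR d x z * dR d y u = dR d x u * dR d y z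

/-- The timelike line dual to the event `e`, for the Möbius structure `M`. -/
def hline (M : MoebiusStructure) (e : Event) : Set Event := {a | MHarmonic M a e}

/-- Axiom (h1). -/
def AxH1 (H : Set (Set Event)) (line : Event → Set Event) : Prop :=
  (∀ e, line e ∈ H) ∧ ∀ h ∈ H, ∃ e, h = line e

/-- Axiom (h2): any event on `h_e` separates `e`. -/
def AxH2 (line : Event → Set Event) : Prop := ∀ e a, a ∈ line e → EventSep a e

/-- Axiom (h3): any two events on a timelike line are in the causal relation. -/
def AxH3 (line : Event → Set Event) : Prop :=
  ∀ e a b, a ∈ line e → b ∈ line e → Causal a b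

/-- Axiom (h4): for any `x ∉ e` there is a unique event `x_e ∈ h_e` containing `x`. -/
def AxH4 (line : Event → Set Event) : Prop :=
  ∀ e : Event, ∀ x : Circle, x ∉ EventPts e → ∃! a : Event, a ∈ line e ∧ x ∈ a.1

/-- Axiom (h5): duality. -/
def AxH5 (line : Event → Set Event) : Prop := ∀ e a, a ∈ line e → e ∈ line a

/-- Axiom (h6): two distinct events lie on at most one common timelike line. -/
def AxH6 (line : Event → Set Event) : Prop :=
  ∀ a b : Event, a ≠ b → ∀ e e',
    a ∈ line e → b ∈ line e → a ∈ line e' → b ∈ line e' → e = e'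

/-- The projection `x_e`: the unique event of the timelike line `h_e` containing `x`
(junk value if there is none). -/
noncomputable def proj (line : Event → Set Event) (e : Event) (x : Circle) : Event :=
  letI := Classical.propDecidable (∃ a, a ∈ line e ∧ x ∈ a.1)
  if h : ∃ a, a ∈ line e ∧ x ∈ a.1 then h.choose else e

/-- Axiom (t1). -/
def AxT1 (t : Event → Event → ℝ) : Prop := ∀ a b, Causal a b → 0 ≤ t a b

/-- Axiom (t2). -/
def AxT2 (t : Event → Event → ℝ) : Prop :=
  ∀ a b, Causal a b → (t a b = 0 ↔ OnLight a b)

/-- Axiom (t3). -/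
def AxT3 (t : Event → Event → ℝ) : Prop := ∀ a b, Causal a b → t a b = t b a

/-- Axiom (t4a): timelike lines are `t`-geodesics. -/
def AxT4a (line : Event → Set Event) (t : Event → Event → ℝ) : Prop :=
  ∀ a, ∀ e e' e'', e ∈ line a → e' ∈ line a → e'' ∈ line a →
    Between e e' e'' → t e e' + t e' e'' = t e e''

/-- Axiom (t4b): events at any prescribed time on both sides. -/
def AxT4b (line : Event → Set Event) (t : Event → Event → ℝ) : Prop :=
  ∀ a, ∀ e ∈ line a, ∀ s : ℝ, 0 < s →
    ∃ ep em, ep ∈ line a ∧ em ∈ line a ∧ SBtw em e ep ∧ t e ep = s ∧ t e em = s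

/-- Axiom (t5). -/
def AxT5 (line : Event → Set Event) (t : Event → Event → ℝ) : Prop :=
  ∀ e d : Event, ∀ x y z u : Circle,
    e.1 = s(x, y) → d.1 = s(z, u) → StrongCausal e d →
    t (proj line e z) (proj line e u) = t (proj line d x) (proj line d y)

/-- Axiom (t6): harmonicity. -/
def AxT6 (line : Event → Set Event) (t : Event → Event → ℝ) : Prop :=
  ∀ e d : Event, ∀ x y z u : Circle,
    e.1 = s(x, y) → d.1 = s(z, u) → d ∈ line e →
    ∀ a b : Event, a.1 = s(x, z) → b.1 = s(x, u) →
      t (proj line a y) (proj line a u) = t (proj line b y) (proj line b z)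

/-- The time determined by a Möbius structure: `0` on light lines, and the
cross-ratio formula for events in the strong causal relation via a
common perpendicular. -/
def TimeSpec (M : MoebiusStructure) (t : Event → Event → ℝ) : Prop :=
  (∀ a b, OnLight a b → t a b = 0) ∧
  (∀ a b e : Event, a ∈ hline M e → b ∈ hline M e → a ≠ b →
    ∀ x y z z' : Circle, e.1 = s(x, y) → z ∈ a.1 → z' ∈ b.1 →
      ∀ d ∈ M.sems, AvoidsRemote d {x, y, z, z'} →
        t a b = |Real.log (dR d x z' * dR d y z / (dR d x z * dR d y z'))|)

/-- The function `F_{ab}` of the hierarchy of time conditions, on events `d`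
strictly between `(o,ω)` and `(o',ω')`, for `a = (o,o')`, `b = (ω,ω')`. -/
noncomputable def Fab (line : Event → Set Event) (t : Event → Event → ℝ)
    (o ω o' ω' : Circle) (d : Event) : ℝ :=
  (t (proj line d o) (proj line d ω) + t (proj line d o') (proj line d ω')) / 2

end Paper

namespace Paper

/-- The defining property of the reflection `ρ_e` with respect to the event `e`. -/
def RefSpec (line : Event → Set Event) (e : Event) (ρ : Circle → Circle) : Prop :=
  (∀ p ∈ EventPts e, ρ p = p) ∧
    ∀ x, x ∉ EventPts e → ρ x ≠ x ∧ ∃ a ∈ line e, x ∈ a.1 ∧ ρ x ∈ a.1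

/-- The label of a fixed-point-free involution of `Fin 4`
(the partner of `0`, shifted down by one). -/
def label (σ : Equiv.Perm (Fin 4)) : Fin 3 :=
  if σ 0 = 1 then 0 else if σ 0 = 2 then 1 else 2

/-- The three fixed-point-free involutions of `Fin 4`, i.e. the three partitions of a
4-element set into pairs of opposite edges. -/
def inv3 : Fin 3 → Equiv.Perm (Fin 4) :=
  ![Equiv.swap 0 1 * Equiv.swap 2 3, Equiv.swap 0 2 * Equiv.swap 1 3,
    Equiv.swap 0 3 * Equiv.swap 1 2]

/-- The cross-ratio homomorphism `φ : S₄ → S₃`, acting on the labels of the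
partitions into pairs of opposite edges by conjugation. -/
def permAct (π : Equiv.Perm (Fin 4)) (j : Fin 3) : Fin 3 := label (π * inv3 j * π⁻¹)

/-- A sub-Möbius structure on the circle: a map `regP₄ → L₄` equivariant with respect
to the signed cross-ratio homomorphism. -/
def SubMoebius (M : (Fin 4 → Circle) → Fin 3 → ℝ) : Prop :=
  (∀ q : Fin 4 → Circle, Function.Injective q → M q 0 + M q 1 + M q 2 = 0) ∧
  ∀ q : Fin 4 → Circle, Function.Injective q → ∀ π : Equiv.Perm (Fin 4), ∀ j : Fin 3,
    M (q ∘ π) j = ((Equiv.Perm.sign π : ℤ) : ℝ) * M q (permAct π j)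

/-- The base values of the sub-Möbius structure associated with a timed causal space:
for a 4-tuple `q = (x,y,z,u)` whose cyclic order is `xyuz` (i.e. the pairs `(x,u)` and
`(y,z)` separate each other), `M(q) = (−t_{xy}, t_{yu}, t_{xy} − t_{yu})`, where
`t_{xy}` is the time between the projections of `u`, `z` to the timelike line dual to
the event `(x,y)`, and `t_{yu}` the time between the projections of `z`, `x` to the
timelike line dual to the event `(y,u)`. -/
def BaseSpec (line : Event → Set Event) (t : Event → Event → ℝ)
    (M : (Fin 4 → Circle) → Fin 3 → ℝ) : Prop :=
  ∀ q : Fin 4 → Circle, Function.Injective q →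
    SeparatesPts (q 0) (q 3) (q 1) (q 2) →
    ∀ exy eyu : Event, exy.1 = s(q 0, q 1) → eyu.1 = s(q 1, q 3) →
      M q 0 = -(t (proj line exy (q 3)) (proj line exy (q 2))) ∧
      M q 1 = t (proj line eyu (q 2)) (proj line eyu (q 0)) ∧
      M q 2 = t (proj line exy (q 3)) (proj line exy (q 2))
                - t (proj line eyu (q 2)) (proj line eyu (q 0))

/-- The three cross-ratios `(ln cr₁, ln cr₂, ln cr₃)` of a 4-tuple with respect to a
semi-metric. -/
noncomputable def crMap (dm : Circle → Circle → ℝ≥0∞) (q : Fin 4 → Circle) :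
    Fin 3 → ℝ :=
  ![Real.log (dR dm (q 0) (q 2) * dR dm (q 1) (q 3)
      / (dR dm (q 0) (q 3) * dR dm (q 1) (q 2))),
    Real.log (dR dm (q 0) (q 3) * dR dm (q 1) (q 2)
      / (dR dm (q 0) (q 1) * dR dm (q 2) (q 3))),
    Real.log (dR dm (q 0) (q 1) * dR dm (q 2) (q 3)
      / (dR dm (q 1) (q 3) * dR dm (q 0) (q 2)))]

/-- The semi-metrics whose cross-ratio map is the given map `M`. -/
def mapSems (M : (Fin 4 → Circle) → Fin 3 → ℝ) : Set (Circle → Circle → ℝ≥0∞) :=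
  {dm | IsSemiMetric dm ∧ ∀ q : Fin 4 → Circle, Function.Injective q →
    AvoidsRemote dm (Set.range q) → ∀ j, M q j = crMap dm q j}

/-- Harmonicity of a pair of events with respect to a map-form Möbius structure `M`:
`ln cr₃(u,x,y,z) = 0`. -/
def MapHarmonic (M : (Fin 4 → Circle) → Fin 3 → ℝ) (a b : Event) : Prop :=
  ∃ x y z u : Circle, a.1 = s(x, y) ∧ b.1 = s(z, u) ∧
    Function.Injective ![u, x, y, z] ∧ M ![u, x, y, z] 2 = 0

/-- The 4-tuple `(x₁,x₂,x₃,x₄)` is harmonic with respect to the Möbius structure `M`: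
`|x₁x₃|·|x₂x₄| = |x₁x₄|·|x₂x₃|`. -/
def Harm4 (M : MoebiusStructure) (x₁ x₂ x₃ x₄ : Circle) : Prop :=
  ∀ d ∈ M.sems, AvoidsRemote d {x₁, x₂, x₃, x₄} →
    dR d x₁ x₃ * dR d x₂ x₄ = dR d x₁ x₄ * dR d x₂ x₃

/-- The cross-ratio `cr₁`. -/
noncomputable def cr1R (d : Circle → Circle → ℝ≥0∞) (a b c e : Circle) : ℝ :=
  dR d a c * dR d b e / (dR d a e * dR d b c)

/-- A tuple of points of the circle is in cyclic order. -/
def InCyclicOrder {n : ℕ} (q : Fin n → Circle) : Prop :=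
  ∀ i j k l : Fin n, i < j → j < k → k < l → SeparatesPts (q i) (q k) (q j) (q l)

/-- Increment Axiom (I). -/
def AxiomI (M : MoebiusStructure) : Prop :=
  ∀ q : Fin 7 → Circle, Function.Injective q → InCyclicOrder q →
    Harm4 M (q 0) (q 2) (q 4) (q 5) → Harm4 M (q 1) (q 2) (q 3) (q 5) →
    ∀ d ∈ M.sems, AvoidsRemote d (Set.range q) →
      cr1R d (q 3) (q 4) (q 5) (q 6) < cr1R d (q 0) (q 1) (q 5) (q 6)

/-- The Lambert quadrilateral inequality (LQI). -/
def LQI (line : Event → Set Event) (t : Event → Event → ℝ) : Prop :=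
  ∀ a b : Event, ∀ o o' ω ω' : Circle,
    a.1 = s(o, o') → b.1 = s(ω, ω') → StrongCausal a b → SeparatesPts o ω' o' ω →
    ∀ eA eB : Event, eA.1 = s(o, ω) → eB.1 = s(o', ω') →
    ∀ d₀ : Event, a ∈ line d₀ → b ∈ line d₀ →
    ∀ d : Event, StrictlyBetween d eA eB → d ≠ d₀ → a ∈ line d →
      Fab line t o ω o' ω' d₀ < Fab line t o ω o' ω' d

/-- `g` is an `M`-automorphism: a bijection of the circle preserving the cross-ratios
of the Möbius structure `M`. -/
def MAut (M : MoebiusStructure) (g : Circle ≃ Circle) : Prop :=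
  ∀ d ∈ M.sems, ∀ d' ∈ M.sems, ∀ x y z u : Circle,
    x ≠ y → x ≠ z → x ≠ u → y ≠ z → y ≠ u → z ≠ u →
    AvoidsRemote d {x, y, z, u} → AvoidsRemote d' {g x, g y, g z, g u} →
    dR d' (g x) (g z) * dR d' (g y) (g u) * (dR d x u * dR d y z)
      = dR d x z * dR d y u * (dR d' (g x) (g u) * dR d' (g y) (g z))

theorem map_not_isDiag (g : Circle ≃ Circle) (z : Sym2 Circle) (h : ¬ z.IsDiag) :
    ¬ (z.map g).IsDiag := by
  induction z using Sym2.ind with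
  | _ x y =>
    rw [Sym2.map_pair_eq, Sym2.mk_isDiag_iff]
    rw [Sym2.mk_isDiag_iff] at h
    exact fun hg => h (g.injective hg)

/-- The map of events induced by a bijection of the circle. -/
def emap (g : Circle ≃ Circle) (e : Event) : Event :=
  ⟨e.1.map g, map_not_isDiag g e.1 e.2⟩

end Paper

/-!
Write `t_{xz}(y, u)` for the time between the projections of `y` and `u` to `h_{(x, z)}`.

Forward direction: for `d = (x, y)` on `h_e`, `e = (z, u)`, the base formula and the signed
equivariance of `M` turn the harmonic coordinate `M(u, x, y, z)₂` into
`t_{xz}(y, u) - t_{zy}(u, x)` (up to sign), which vanishes by (t6).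

Converse: some pairing of `x, y, z, u` separates. If it is not `(x, y) | (z, u)`, the harmonic
coordinate is, up to sign, a single time `t_{xy}(z, u)` between the projections of two points
on the same side of `(x, y)`; these projections share no point, so the time is positive by
(t1), (t2). If `(x, y)` separates `(z, u)`, let `(x, w)` be the event of `h_e` through `x`. By
(t6) and (t5) both `w` and `y` are zeros of `v ↦ t_{xz}(v, u) - t_{xu}(z, v)` on the arc from
`z` to `u`, and this function is strictly decreasing by (t4a) and positivity of time; so `w = y`.
-/

namespace Paper

open Real Function

lemma exp_ne_exp_of_lt {r s : ℝ} (h : r < s) (h' : s < r + 2 * π) :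
    Circle.exp r ≠ Circle.exp s :=
  ((Circle.exp_injOn_Icc (a := r) (b := s) (by linarith)).ne_iff
    ⟨le_rfl, h.le⟩ ⟨h.le, le_rfl⟩).mpr h.ne

lemma exists_exp_eq_of_ne {a : ℝ} {p : Circle} (hp : p ≠ Circle.exp a) :
    ∃ r ∈ Ioo a (a + 2 * π), Circle.exp r = p := by
  have hp' : p ∈ Circle.exp '' Ioc a (a + 2 * π) := by
    rw [Circle.periodic_exp.image_Ioc two_pi_pos a]
    exact Circle.exp_surjective p
  obtain ⟨r, hr, rfl⟩ := hp'
  refine ⟨r, ⟨hr.1, hr.2.lt_of_ne ?_⟩, rfl⟩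
  rintro rfl
  exact hp (Circle.exp_add_two_pi a)

lemma exp_mem_image_Ioo_iff {a s u r : ℝ} (hs : a ≤ s) (hu : u ≤ a + 2 * π)
    (hr : r ∈ Ioc a (a + 2 * π)) : Circle.exp r ∈ Circle.exp '' Ioo s u ↔ r ∈ Ioo s u :=
  (Circle.exp_injOn_Ioc (by linarith)).mem_image_iff
    (fun v hv => ⟨hs.trans_lt hv.1, hv.2.le.trans hu⟩) hr

lemma connectedComponentIn_compl_pair_exp {a b r : ℝ} (hr : r ∈ Ioo a b)
    (hb : b < a + 2 * π) :
    connectedComponentIn ({Circle.exp a, Circle.exp b}ᶜ : Set Circle) (Circle.exp r)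
      = Circle.exp '' Ioo a b := by
  have hab : a < b := hr.1.trans hr.2
  have hU : Circle.exp '' Ioo a b ⊆ {Circle.exp a, Circle.exp b}ᶜ := by
    rintro _ ⟨v, hv, rfl⟩
    simp only [mem_compl_iff, mem_insert_iff, mem_singleton_iff, not_or]
    exact ⟨(exp_ne_exp_of_lt hv.1 (by linarith [hv.2])).symm,
      exp_ne_exp_of_lt hv.2 (by linarith [hv.1])⟩
  have hcover : ({Circle.exp a, Circle.exp b}ᶜ : Set Circle)
      ⊆ Circle.exp '' Ioo a b ∪ Circle.exp '' Ioo b (a + 2 * π) := by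
    intro p hp
    simp only [mem_compl_iff, mem_insert_iff, mem_singleton_iff, not_or] at hp
    obtain ⟨v, hv, rfl⟩ := exists_exp_eq_of_ne hp.1
    rcases lt_or_gt_of_ne (show v ≠ b by rintro rfl; exact hp.2 rfl) with h | h
    · exact Or.inl ⟨v, ⟨hv.1, h⟩, rfl⟩
    · exact Or.inr ⟨v, ⟨h, hv.2⟩, rfl⟩
  have hdisj : Disjoint (Circle.exp '' Ioo a b) (Circle.exp '' Ioo b (a + 2 * π)) := by
    rw [Set.disjoint_left]
    rintro _ ⟨v, hv, rfl⟩ hv'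
    rw [exp_mem_image_Ioo_iff hab.le le_rfl ⟨hv.1, by linarith [hv.2]⟩] at hv'
    exact absurd hv.2 hv'.1.not_gt
  have hrU : Circle.exp r ∈ Circle.exp '' Ioo a b := ⟨r, hr, rfl⟩
  refine (isPreconnected_connectedComponentIn.subset_left_of_subset_union
    (isLocalHomeomorph_circleExp.isOpenMap _ isOpen_Ioo)
    (isLocalHomeomorph_circleExp.isOpenMap _ isOpen_Ioo) hdisj
    ((connectedComponentIn_subset _ _).trans hcover)
    ⟨_, mem_connectedComponentIn (hU hrU), hrU⟩).antisymm ?_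
  exact (isPreconnected_Ioo.image _ Circle.exp.continuous.continuousOn).subset_connectedComponentIn
    hrU hU

lemma separatesPts_exp_iff {a p z u : ℝ} (hp : p ∈ Ioo a (a + 2 * π))
    (hz : z ∈ Ioo a (a + 2 * π)) (hu : u ∈ Ioo a (a + 2 * π)) (hzp : z ≠ p) (hup : u ≠ p) :
    SeparatesPts (Circle.exp a) (Circle.exp p) (Circle.exp z) (Circle.exp u) ↔
      (z < p ∧ p < u) ∨ (u < p ∧ p < z) := by
  have hmem : ∀ v ∈ Ioo a (a + 2 * π), v ≠ p →
      Circle.exp v ∈ ({Circle.exp a, Circle.exp p}ᶜ : Set Circle) := by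
    intro v hv hvp
    simp only [mem_compl_iff, mem_insert_iff, mem_singleton_iff, not_or]
    refine ⟨(exp_ne_exp_of_lt hv.1 (by linarith [hv.2])).symm, ?_⟩
    rcases lt_or_gt_of_ne hvp with h | h
    · exact exp_ne_exp_of_lt h (by linarith [hv.1, hp.2])
    · exact (exp_ne_exp_of_lt h (by linarith [hv.2, hp.1])).symm
  have hu' : u ∈ Ioc a (a + 2 * π) := Ioo_subset_Ioc_self hu
  rw [SeparatesPts, and_iff_right (hmem z hz hzp), and_iff_right (hmem u hu hup)]
  rcases lt_or_gt_of_ne hzp with h | h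
  · rw [connectedComponentIn_compl_pair_exp ⟨hz.1, h⟩ hp.2,
      exp_mem_image_Ioo_iff le_rfl hp.2.le hu']
    simp only [mem_Ioo, hu.1, true_and]
    constructor
    · intro h'; exact Or.inl ⟨h, (not_lt.mp h').lt_of_ne' hup⟩
    · rintro (h' | h') <;> linarith [h'.1, h'.2]
  · rw [show ({Circle.exp a, Circle.exp p} : Set Circle) = {Circle.exp p, Circle.exp (a + 2 * π)}
        by rw [Circle.exp_add_two_pi, pair_comm],
      connectedComponentIn_compl_pair_exp ⟨h, hz.2⟩ (by linarith [hp.1]),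
      exp_mem_image_Ioo_iff hp.1.le le_rfl hu']
    simp only [mem_Ioo, hu.2, and_true]
    constructor
    · intro h'; exact Or.inr ⟨(not_lt.mp h').lt_of_ne hup, h⟩
    · rintro (h' | h') <;> linarith [h'.1, h'.2]

lemma separatesPts_exp_of_lt {a b c d : ℝ} (hab : a < b) (hbc : b < c) (hcd : c < d)
    (hd : d < a + 2 * π) :
    SeparatesPts (Circle.exp a) (Circle.exp c) (Circle.exp b) (Circle.exp d) :=
  (separatesPts_exp_iff ⟨by linarith, by linarith⟩ ⟨hab, by linarith⟩ ⟨by linarith, hd⟩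
    hbc.ne hcd.ne').mpr (Or.inl ⟨hbc, hcd⟩)

lemma not_separatesPts_exp_of_lt {a b c d : ℝ} (hab : a < b) (hbc : b < c) (hcd : c < d)
    (hd : d < a + 2 * π) :
    ¬ SeparatesPts (Circle.exp a) (Circle.exp b) (Circle.exp c) (Circle.exp d) := by
  rw [separatesPts_exp_iff ⟨hab, by linarith⟩ ⟨by linarith, by linarith⟩ ⟨by linarith, hd⟩
    hbc.ne' (by linarith)]
  rintro (h | h) <;> linarith [h.1, h.2]

lemma exists_exp_coords {x y z u : Circle} (hxy : x ≠ y) (hxz : x ≠ z) (hxu : x ≠ u) :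
    ∃ a b c d : ℝ, x = Circle.exp a ∧ y = Circle.exp b ∧ z = Circle.exp c ∧
      u = Circle.exp d ∧ b ∈ Ioo a (a + 2 * π) ∧ c ∈ Ioo a (a + 2 * π) ∧
      d ∈ Ioo a (a + 2 * π) := by
  obtain ⟨a, rfl⟩ := Circle.exp_surjective x
  obtain ⟨b, hb, rfl⟩ := exists_exp_eq_of_ne hxy.symm
  obtain ⟨c, hc, rfl⟩ := exists_exp_eq_of_ne hxz.symm
  obtain ⟨d, hd, rfl⟩ := exists_exp_eq_of_ne hxu.symm
  exact ⟨a, b, c, d, rfl, rfl, rfl, rfl, hb, hc, hd⟩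

namespace SeparatesPts

variable {x y z u : Circle}

lemma swap_left (h : SeparatesPts x y z u) : SeparatesPts y x z u := by
  rwa [SeparatesPts, pair_comm y x]

lemma swap_right (h : SeparatesPts x y z u) : SeparatesPts x y u z := by
  obtain ⟨hz, hu, hcomp⟩ := h
  refine ⟨hu, hz, fun hmem => hcomp ?_⟩
  rw [← connectedComponentIn_eq hmem]
  exact mem_connectedComponentIn hu

lemma ne (h : SeparatesPts x y z u) : z ≠ x ∧ z ≠ y ∧ u ≠ x ∧ u ≠ y ∧ z ≠ u := by
  obtain ⟨hz, hu, hcomp⟩ := h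
  simp only [mem_compl_iff, mem_insert_iff, mem_singleton_iff, not_or] at hz hu
  refine ⟨hz.1, hz.2, hu.1, hu.2, ?_⟩
  rintro rfl
  exact hcomp (mem_connectedComponentIn (by simpa [not_or] using hz))

lemma of_sym2_eq {x' y' z' u' : Circle} (h : SeparatesPts x y z u)
    (hxy : s(x, y) = s(x', y')) (hzu : s(z, u) = s(z', u')) : SeparatesPts x' y' z' u' := by
  rcases Sym2.eq_iff.mp hxy with ⟨rfl, rfl⟩ | ⟨rfl, rfl⟩ <;>
    rcases Sym2.eq_iff.mp hzu with ⟨rfl, rfl⟩ | ⟨rfl, rfl⟩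
  exacts [h, h.swap_right, h.swap_left, h.swap_left.swap_right]

lemma symm (hxy : x ≠ y) (h : SeparatesPts x y z u) : SeparatesPts z u x y := by
  obtain ⟨hzx, hzy, hux, huy, -⟩ := h.ne
  obtain ⟨a, b, c, d, rfl, rfl, rfl, rfl, hb, hc, hd⟩ := exists_exp_coords hxy hzx.symm hux.symm
  rcases (separatesPts_exp_iff hb hc hd (ne_of_apply_ne _ hzy) (ne_of_apply_ne _ huy)).mp h
    with h' | h'
  · simpa only [Circle.exp_add_two_pi] using
      (separatesPts_exp_of_lt (d := a + 2 * π) h'.1 h'.2 (by linarith [hd.2])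
        (by linarith [hc.1])).swap_right
  · simpa only [Circle.exp_add_two_pi] using
      (separatesPts_exp_of_lt (d := a + 2 * π) h'.1 h'.2 (by linarith [hc.2])
        (by linarith [hd.1])).swap_right.swap_left

lemma not_swap_mid (h : SeparatesPts x y z u) : ¬ SeparatesPts x z y u := by
  intro h'
  obtain ⟨hzx, hzy, hux, huy, hzu⟩ := h.ne
  obtain ⟨a, b, c, d, rfl, rfl, rfl, rfl, hb, hc, hd⟩ :=
    exists_exp_coords h'.ne.1.symm hzx.symm hux.symm
  rw [separatesPts_exp_iff hb hc hd (ne_of_apply_ne _ hzy) (ne_of_apply_ne _ huy)] at h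
  rw [separatesPts_exp_iff hc hb hd (ne_of_apply_ne _ hzy).symm
    (ne_of_apply_ne _ h'.ne.2.2.2.1)] at h'
  grind

lemma trichotomy (hxy : x ≠ y) (hxz : x ≠ z) (hxu : x ≠ u) (hyz : y ≠ z) (hyu : y ≠ u)
    (hzu : z ≠ u) :
    SeparatesPts x y z u ∨ SeparatesPts x z y u ∨ SeparatesPts x u y z := by
  obtain ⟨a, b, c, d, rfl, rfl, rfl, rfl, hb, hc, hd⟩ := exists_exp_coords hxy hxz hxu
  have hbc := ne_of_apply_ne _ hyz
  have hbd := ne_of_apply_ne _ hyu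
  have hcd := ne_of_apply_ne _ hzu
  rw [separatesPts_exp_iff hb hc hd hbc.symm hbd.symm, separatesPts_exp_iff hc hb hd hbc hcd.symm,
    separatesPts_exp_iff hd hb hc hbd hcd]
  grind

end SeparatesPts

lemma injective_vec4 {x y z u : Circle} (hxy : x ≠ y) (hxz : x ≠ z) (hxu : x ≠ u)
    (hyz : y ≠ z) (hyu : y ≠ u) (hzu : z ≠ u) : Injective ![x, y, z, u] := by
  intro i j hij
  fin_cases i <;> fin_cases j <;> simp_all [eq_comm]

namespace SubMoebius

variable {M : (Fin 4 → Circle) → Fin 3 → ℝ} {x y z u : Circle}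

lemma apply_comp_perm (hsub : SubMoebius M) {q q' : Fin 4 → Circle} (hq : Injective q)
    (σ : Equiv.Perm (Fin 4)) (hσ : q ∘ σ = q') {j k : Fin 3} (hk : permAct σ j = k)
    {ε : ℤˣ} (hε : Equiv.Perm.sign σ = ε) : M q' j = ((ε : ℤ) : ℝ) * M q k := by
  subst hσ hk hε
  exact hsub.2 q hq σ j

lemma apply_swap (hsub : SubMoebius M) (hq : Injective ![u, x, y, z]) :
    M ![z, x, y, u] 2 = -M ![u, x, y, z] 2 := by
  rw [hsub.apply_comp_perm (k := 2) (ε := -1) hq (Equiv.swap 0 3)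
    (by funext i; fin_cases i <;> rfl) (by decide) (by decide)]
  simp

lemma apply_eq_neg_apply (hsub : SubMoebius M) (hq : Injective ![x, z, u, y]) :
    M ![u, x, y, z] 2 = -M ![x, z, u, y] 2 := by
  rw [hsub.apply_comp_perm (k := 2) (ε := -1) hq
    ⟨![2, 0, 3, 1], ![1, 3, 0, 2], by decide, by decide⟩ (by funext i; fin_cases i <;> rfl)
    (by decide) (by decide)]
  simp

lemma apply_eq_apply_zero (hsub : SubMoebius M) (hq : Injective ![x, y, u, z]) :
    M ![u, x, y, z] 2 = M ![x, y, u, z] 0 := by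
  rw [hsub.apply_comp_perm (k := 0) (ε := 1) hq
    ⟨![2, 0, 1, 3], ![1, 2, 0, 3], by decide, by decide⟩ (by funext i; fin_cases i <;> rfl)
    (by decide) (by decide)]
  simp

end SubMoebius

def mkEvent (p q : Circle) (h : p ≠ q) : Event := ⟨s(p, q), by rwa [Sym2.mk_isDiag_iff]⟩

lemma ne_of_event_eq {e : Event} {p q : Circle} (h : e.1 = s(p, q)) : p ≠ q := by
  have := e.2
  rwa [h, Sym2.mk_isDiag_iff] at this

lemma eventPts_eq {e : Event} {p q : Circle} (h : e.1 = s(p, q)) : EventPts e = {p, q} := by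
  ext w
  simp [EventPts, h]

lemma notMem_eventPts {e : Event} {p q w : Circle} (h : e.1 = s(p, q)) (hp : w ≠ p)
    (hq : w ≠ q) : w ∉ EventPts e := by
  simp [eventPts_eq h, hp, hq]

lemma isOpenArc_exp_image_Ioo {e : Event} {a b : ℝ}
    (he : e.1 = s(Circle.exp a, Circle.exp b)) (hab : a < b) (hb : b < a + 2 * π) :
    IsOpenArc e (Circle.exp '' Ioo a b) := by
  have hcomp := connectedComponentIn_compl_pair_exp (r := (a + b) / 2)
    ⟨by linarith, by linarith⟩ hb
  refine ⟨Circle.exp ((a + b) / 2), ?_, by rw [eventPts_eq he, hcomp]⟩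
  rw [eventPts_eq he]
  have hsub := connectedComponentIn_subset ({Circle.exp a, Circle.exp b}ᶜ : Set Circle)
    (Circle.exp ((a + b) / 2))
  rw [hcomp] at hsub
  exact hsub (mem_image_of_mem _ ⟨by linarith, by linarith⟩)

lemma exp_image_Ioo_ne {a b : ℝ} (hab : a < b) (hb : b < a + 2 * π) :
    Circle.exp '' Ioo a b ≠ Circle.exp '' Ioo b (a + 2 * π) := by
  intro h
  have hmem : Circle.exp ((a + b) / 2) ∈ Circle.exp '' Ioo b (a + 2 * π) :=
    h ▸ mem_image_of_mem _ ⟨by linarith, by linarith⟩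
  rw [exp_mem_image_Ioo_iff hab.le le_rfl ⟨by linarith, by linarith⟩] at hmem
  linarith [hmem.1]

lemma not_onLight_of_ne {a b : Event} {p q v w : Circle} (ha : a.1 = s(p, q))
    (hb : b.1 = s(v, w)) (hpv : p ≠ v) (hpw : p ≠ w) (hqv : q ≠ v) (hqw : q ≠ w) :
    ¬ OnLight a b := by
  rintro ⟨x, hxa, hxb⟩
  rw [ha, Sym2.mem_iff] at hxa
  rw [hb, Sym2.mem_iff] at hxb
  rcases hxa with rfl | rfl <;> rcases hxb with rfl | rfl <;> contradiction

lemma causal_of_not_separatesPts {a b : Event} {p q v w : Circle} (ha : a.1 = s(p, q))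
    (hb : b.1 = s(v, w)) (h : ¬ SeparatesPts p q v w) : Causal a b := by
  rintro ⟨p', q', v', w', ha', hb', hsep⟩
  exact h (hsep.of_sym2_eq (ha' ▸ ha) (hb' ▸ hb))

section TimedCausalSpace

variable {line : Event → Set Event} {t : Event → Event → ℝ}

lemma proj_spec (h4 : AxH4 line) {e : Event} {x : Circle} (hx : x ∉ EventPts e) :
    proj line e x ∈ line e ∧ x ∈ (proj line e x).1 := by
  have hex : ∃ a, a ∈ line e ∧ x ∈ a.1 := (h4 e x hx).exists
  rw [proj, dif_pos hex]
  exact hex.choose_spec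

lemma proj_eq_of_mem (h4 : AxH4 line) {e a : Event} {x : Circle} (hx : x ∉ EventPts e)
    (ha : a ∈ line e) (hxa : x ∈ a.1) : proj line e x = a :=
  (h4 e x hx).unique (proj_spec h4 hx) ⟨ha, hxa⟩

lemma separatesPts_of_mem_line (h2 : AxH2 line) {e a : Event} (ha : a ∈ line e)
    {p q r s : Circle} (hpq : a.1 = s(p, q)) (hrs : e.1 = s(r, s)) :
    SeparatesPts p q r s := by
  obtain ⟨p', q', r', s', ha', he', hsep⟩ := h2 e a ha
  exact hsep.of_sym2_eq (ha' ▸ hpq) (he' ▸ hrs)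

lemma notMem_eventPts_of_mem_line (h2 : AxH2 line) {e a : Event} (ha : a ∈ line e)
    {p : Circle} (hp : p ∈ a.1) : p ∉ EventPts e := by
  obtain ⟨p', q', r, s, ha', he, hsep⟩ := h2 e a ha
  obtain ⟨hp'r, hp's, hq'r, hq's, -⟩ := (hsep.symm (ne_of_event_eq ha')).ne
  rw [ha', Sym2.mem_iff] at hp
  rcases hp with rfl | rfl
  exacts [notMem_eventPts he hp'r hp's, notMem_eventPts he hq'r hq's]

lemma time_comm_of_mem_line (h3 : AxH3 line) (ht3 : AxT3 t) {L a b : Event}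
    (ha : a ∈ line L) (hb : b ∈ line L) : t a b = t b a :=
  ht3 a b (h3 L a b ha hb)

/-- If the projections of `z` and `u` to `h_L` met, they would coincide by (h4), so `(z, u)`
itself would be an event of `h_L` and would separate `L` by (h2). -/
lemma not_onLight_proj (h2 : AxH2 line) (h4 : AxH4 line) {L : Event} {x y z u : Circle}
    (hL : L.1 = s(x, y)) (hz : z ∉ EventPts L) (hu : u ∉ EventPts L) (hzu : z ≠ u)
    (hsep : ¬ SeparatesPts x y z u) : ¬ OnLight (proj line L z) (proj line L u) := by
  rintro ⟨p, hpz, hpu⟩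
  obtain ⟨hPz, hzPz⟩ := proj_spec h4 hz
  obtain ⟨hPu, huPu⟩ := proj_spec h4 hu
  have hp : p ∉ EventPts L := notMem_eventPts_of_mem_line h2 hPz hpz
  rw [← proj_eq_of_mem h4 hp hPu hpu, proj_eq_of_mem h4 hp hPz hpz] at huPu
  obtain ⟨c, hc⟩ := Sym2.mem_iff_exists.mp hzPz
  obtain rfl : u = c := by
    rw [hc, Sym2.mem_iff] at huPu
    exact huPu.resolve_left hzu.symm
  exact hsep ((separatesPts_of_mem_line h2 hPz hc hL).symm hzu)

lemma time_proj_pos (h2 : AxH2 line) (h3 : AxH3 line) (h4 : AxH4 line) (ht1 : AxT1 t)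
    (ht2 : AxT2 t) {L : Event} {x y z u : Circle} (hL : L.1 = s(x, y)) (hz : z ∉ EventPts L)
    (hu : u ∉ EventPts L) (hzu : z ≠ u) (hsep : ¬ SeparatesPts x y z u) :
    0 < t (proj line L z) (proj line L u) := by
  have hcausal := h3 L _ _ (proj_spec h4 hz).1 (proj_spec h4 hu).1
  refine (ht1 _ _ hcausal).lt_of_ne fun h => ?_
  exact not_onLight_proj h2 h4 hL hz hu hzu hsep ((ht2 _ _ hcausal).mp h.symm)

section Coordinates

variable {s s' : ℝ} {L : Event}

lemma exp_notMem_eventPts (hL : L.1 = s(Circle.exp s, Circle.exp s')) (hss' : s < s')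
    {r : ℝ} (hr : s' < r) (hr' : r < s + 2 * π) : Circle.exp r ∉ EventPts L :=
  notMem_eventPts hL (exp_ne_exp_of_lt (by linarith) hr').symm
    (exp_ne_exp_of_lt hr (by linarith)).symm

lemma proj_exp_eq (h2 : AxH2 line) (h4 : AxH4 line) (hL : L.1 = s(Circle.exp s, Circle.exp s'))
    (hss' : s < s') {r : ℝ} (hr : s' < r) (hr' : r < s + 2 * π) :
    ∃ c ∈ Ioo s s', (proj line L (Circle.exp r)).1 = s(Circle.exp r, Circle.exp c) := by
  obtain ⟨hP, hrP⟩ := proj_spec h4 (exp_notMem_eventPts hL hss' hr hr')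
  obtain ⟨w, hw⟩ := Sym2.mem_iff_exists.mp hrP
  have hsep := (separatesPts_of_mem_line h2 hP hw hL).symm (ne_of_event_eq hw)
  obtain ⟨-, -, hws, hws', -⟩ := hsep.ne
  obtain ⟨c, hc, rfl⟩ := exists_exp_eq_of_ne hws
  rw [separatesPts_exp_iff ⟨hss', by linarith⟩ ⟨by linarith, hr'⟩ hc hr.ne'
    (ne_of_apply_ne _ hws')] at hsep
  rcases hsep with h | h
  · linarith [h.1]
  · exact ⟨c, ⟨hc.1, h.1⟩, hw⟩

lemma time_proj_exp_pos (h2 : AxH2 line) (h3 : AxH3 line) (h4 : AxH4 line) (ht1 : AxT1 t)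
    (ht2 : AxT2 t) (hL : L.1 = s(Circle.exp s, Circle.exp s')) (hss' : s < s') {r₁ r₂ : ℝ}
    (hr₁ : s' < r₁) (h12 : r₁ < r₂) (hr₂ : r₂ < s + 2 * π) :
    0 < t (proj line L (Circle.exp r₁)) (proj line L (Circle.exp r₂)) :=
  time_proj_pos h2 h3 h4 ht1 ht2 hL (exp_notMem_eventPts hL hss' hr₁ (by linarith))
    (exp_notMem_eventPts hL hss' (by linarith) hr₂) (exp_ne_exp_of_lt h12 (by linarith))
    (not_separatesPts_exp_of_lt hss' hr₁ h12 hr₂)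

/-- Along `h_L`, the second endpoints of the events through `exp r` run backwards as `r`
increases: otherwise two of these events would separate each other, against (h3). -/
lemma snd_lt_of_mem_line (h3 : AxH3 line) (h4 : AxH4 line)
    (hL : L.1 = s(Circle.exp s, Circle.exp s')) (hss' : s < s') {r₁ r₂ c₁ c₂ : ℝ}
    (hr₁ : s' < r₁) (h12 : r₁ < r₂) (hr₂ : r₂ < s + 2 * π) (hc₁ : c₁ ∈ Ioo s s')
    (hc₂ : c₂ ∈ Ioo s s') {P₁ P₂ : Event} (hP₁ : P₁ ∈ line L) (hP₂ : P₂ ∈ line L)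
    (hP₁' : P₁.1 = s(Circle.exp r₁, Circle.exp c₁))
    (hP₂' : P₂.1 = s(Circle.exp r₂, Circle.exp c₂)) : c₂ < c₁ := by
  rcases lt_trichotomy c₂ c₁ with h | rfl | h
  · exact h
  · exfalso
    have hc : Circle.exp c₂ ∉ EventPts L := notMem_eventPts hL
      (exp_ne_exp_of_lt hc₁.1 (by linarith [hc₁.2])).symm
      (exp_ne_exp_of_lt hc₁.2 (by linarith [hc₁.1]))
    have hP : P₁ = P₂ := (h4 L _ hc).unique ⟨hP₁, by simp [hP₁']⟩ ⟨hP₂, by simp [hP₂']⟩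
    have hr₂P₁ : Circle.exp r₂ ∈ P₁.1 := by simp [hP, hP₂']
    rw [hP₁', Sym2.mem_iff] at hr₂P₁
    rcases hr₂P₁ with h | h
    · exact exp_ne_exp_of_lt h12 (by linarith) h.symm
    · exact exp_ne_exp_of_lt (by linarith [hc₁.2]) (by linarith [hc₁.1]) h.symm
  · refine (h3 L P₁ P₂ hP₁ hP₂ ⟨_, _, _, _, hP₁', hP₂', ?_⟩).elim
    simpa only [Circle.exp_add_two_pi] using separatesPts_exp_of_lt (b := r₂) (c := c₁ + 2 * π)
      (d := c₂ + 2 * π) h12 (by linarith [hc₁.1]) (by linarith) (by linarith [hc₂.2])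

lemma between_proj_exp (h2 : AxH2 line) (h3 : AxH3 line) (h4 : AxH4 line)
    (hL : L.1 = s(Circle.exp s, Circle.exp s')) (hss' : s < s') {r₁ r₂ r₃ : ℝ}
    (hr₁ : s' < r₁) (h12 : r₁ < r₂) (h23 : r₂ < r₃) (hr₃ : r₃ < s + 2 * π) :
    Between (proj line L (Circle.exp r₁)) (proj line L (Circle.exp r₂))
      (proj line L (Circle.exp r₃)) := by
  have hP : ∀ {r}, s' < r → r < s + 2 * π → proj line L (Circle.exp r) ∈ line L :=
    fun hr hr' => (proj_spec h4 (exp_notMem_eventPts hL hss' hr hr')).1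
  obtain ⟨c₁, hc₁, hP₁⟩ := proj_exp_eq h2 h4 hL hss' hr₁ (by linarith)
  obtain ⟨c₂, hc₂, hP₂⟩ := proj_exp_eq h2 h4 hL hss' (by linarith) (by linarith : r₂ < _)
  obtain ⟨c₃, hc₃, hP₃⟩ := proj_exp_eq h2 h4 hL hss' (by linarith) hr₃
  have h21 := snd_lt_of_mem_line h3 h4 hL hss' hr₁ h12 (by linarith) hc₁ hc₂
    (hP hr₁ (by linarith)) (hP (by linarith) (by linarith)) hP₁ hP₂
  have h32 := snd_lt_of_mem_line h3 h4 hL hss' (by linarith) h23 hr₃ hc₂ hc₃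
    (hP (by linarith) (by linarith)) (hP (by linarith) hr₃) hP₂ hP₃
  have hc₂r₂ : c₂ < r₂ := by linarith [hc₂.2]
  have hr₂c₂ : r₂ < c₂ + 2 * π := by linarith [hc₂.1]
  refine ⟨_, _, isOpenArc_exp_image_Ioo (hP₂.trans Sym2.eq_swap) hc₂r₂ hr₂c₂,
    isOpenArc_exp_image_Ioo (by rw [hP₂, Circle.exp_add_two_pi]) hr₂c₂ (by linarith),
    exp_image_Ioo_ne hc₂r₂ hr₂c₂, ?_, ?_⟩ <;>
    refine subset_closure.trans' ?_
  · rw [eventPts_eq hP₁]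
    rintro _ (rfl | rfl)
    exacts [⟨r₁, ⟨by linarith [hc₂.2], h12⟩, rfl⟩, ⟨c₁, ⟨h21, by linarith [hc₁.2]⟩, rfl⟩]
  · rw [eventPts_eq hP₃]
    rintro _ (rfl | rfl)
    exacts [⟨r₃, ⟨h23, by linarith [hc₂.1]⟩, rfl⟩,
      ⟨c₃ + 2 * π, ⟨by linarith [hc₃.1], by linarith [hc₂.1]⟩, Circle.exp_add_two_pi c₃⟩]

lemma time_proj_exp_add (h2 : AxH2 line) (h3 : AxH3 line) (h4 : AxH4 line)
    (ht4a : AxT4a line t) (hL : L.1 = s(Circle.exp s, Circle.exp s')) (hss' : s < s')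
    {r₁ r₂ r₃ : ℝ} (hr₁ : s' < r₁) (h12 : r₁ < r₂) (h23 : r₂ < r₃) (hr₃ : r₃ < s + 2 * π) :
    t (proj line L (Circle.exp r₁)) (proj line L (Circle.exp r₂))
      + t (proj line L (Circle.exp r₂)) (proj line L (Circle.exp r₃))
      = t (proj line L (Circle.exp r₁)) (proj line L (Circle.exp r₃)) :=
  ht4a L _ _ _ (proj_spec h4 (exp_notMem_eventPts hL hss' hr₁ (by linarith))).1
    (proj_spec h4 (exp_notMem_eventPts hL hss' (by linarith) (by linarith))).1
    (proj_spec h4 (exp_notMem_eventPts hL hss' (by linarith) hr₃)).1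
    (between_proj_exp h2 h3 h4 hL hss' hr₁ h12 h23 hr₃)

lemma strictAntiOn_time_proj_exp_sub (h2 : AxH2 line) (h3 : AxH3 line) (h4 : AxH4 line)
    (ht1 : AxT1 t) (ht2 : AxT2 t) (ht4a : AxT4a line t) {a z u : ℝ} (haz : a < z)
    (hu : u < a + 2 * π) {A C : Event}
    (hA : A.1 = s(Circle.exp a, Circle.exp z)) (hC : C.1 = s(Circle.exp a, Circle.exp u)) :
    StrictAntiOn (fun v => t (proj line A (Circle.exp v)) (proj line A (Circle.exp u))
      - t (proj line C (Circle.exp z)) (proj line C (Circle.exp v))) (Ioo z u) := by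
  have hC' : C.1 = s(Circle.exp (u - 2 * π), Circle.exp a) := by
    rw [hC, Circle.exp_sub_two_pi, Sym2.eq_swap]
  intro v hv w hw hvw
  have hA_add := time_proj_exp_add h2 h3 h4 ht4a hA haz hv.1 hvw hw.2 hu
  have hA_pos := time_proj_exp_pos h2 h3 h4 ht1 ht2 hA haz hv.1 hvw (by linarith [hw.2])
  have hC_add := time_proj_exp_add h2 h3 h4 ht4a hC' (by linarith) haz hv.1 hvw
    (by linarith [hw.2])
  have hC_pos := time_proj_exp_pos h2 h3 h4 ht1 ht2 hC' (by linarith) (by linarith [hv.1]) hvw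
    (by linarith [hw.2])
  simp only
  linarith

lemma time_proj_eq_of_nested (h3 : AxH3 line) (h4 : AxH4 line) (ht3 : AxT3 t)
    (ht5 : AxT5 line t) {a z v u : ℝ} (haz : a < z) (hzv : z < v) (hvu : v < u)
    (hu : u < a + 2 * π) {B C : Event} (hB : B.1 = s(Circle.exp z, Circle.exp v))
    (hC : C.1 = s(Circle.exp a, Circle.exp u)) :
    t (proj line B (Circle.exp u)) (proj line B (Circle.exp a))
      = t (proj line C (Circle.exp z)) (proj line C (Circle.exp v)) := by
  have hza := exp_ne_exp_of_lt haz (by linarith)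
  have hzu := exp_ne_exp_of_lt (hzv.trans hvu) (by linarith)
  have hva := exp_ne_exp_of_lt (haz.trans hzv) (by linarith)
  have hvu' := exp_ne_exp_of_lt hvu (by linarith)
  have hnsep : ¬ SeparatesPts (Circle.exp z) (Circle.exp v) (Circle.exp a) (Circle.exp u) := by
    rw [← Circle.exp_add_two_pi a]
    exact fun h => not_separatesPts_exp_of_lt hzv hvu (by linarith) (by linarith) h.swap_right
  rw [← ht5 B C _ _ _ _ hB hC ⟨causal_of_not_separatesPts hB hC hnsep,
    not_onLight_of_ne hB hC hza.symm hzu hva.symm hvu'⟩]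
  exact time_comm_of_mem_line h3 ht3 (proj_spec h4 (notMem_eventPts hB hzu.symm hvu'.symm)).1
    (proj_spec h4 (notMem_eventPts hB hza hva)).1

lemma mem_line_of_time_eq (h2 : AxH2 line) (h3 : AxH3 line) (h4 : AxH4 line) (ht1 : AxT1 t)
    (ht2 : AxT2 t) (ht3 : AxT3 t) (ht4a : AxT4a line t) (ht5 : AxT5 line t)
    (ht6 : AxT6 line t) {a z y u : ℝ} (haz : a < z) (hzy : z < y) (hyu : y < u)
    (hu : u < a + 2 * π) {A B e d : Event} (hA : A.1 = s(Circle.exp a, Circle.exp z))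
    (hB : B.1 = s(Circle.exp z, Circle.exp y)) (he : e.1 = s(Circle.exp z, Circle.exp u))
    (hd : d.1 = s(Circle.exp a, Circle.exp y))
    (hH : t (proj line A (Circle.exp y)) (proj line A (Circle.exp u))
      = t (proj line B (Circle.exp u)) (proj line B (Circle.exp a))) :
    d ∈ line e := by
  have hxz := exp_ne_exp_of_lt haz (by linarith)
  have hxu := exp_ne_exp_of_lt (by linarith) hu
  obtain ⟨hD, hxD⟩ := proj_spec (line := line) h4 (notMem_eventPts he hxz hxu)
  obtain ⟨_, hw⟩ := Sym2.mem_iff_exists.mp hxD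
  obtain ⟨w, hwa, rfl⟩ := exists_exp_eq_of_ne (ne_of_event_eq hw).symm
  have hsep := separatesPts_of_mem_line h2 hD hw he
  obtain ⟨-, hzw, -, huw, -⟩ := hsep.ne
  rw [separatesPts_exp_iff hwa ⟨haz, by linarith⟩ ⟨by linarith, hu⟩ (ne_of_apply_ne _ hzw)
    (ne_of_apply_ne _ huw)] at hsep
  have hwzu : w ∈ Ioo z u := by
    rcases hsep with h | h
    · exact h
    · linarith [h.1, h.2]
  obtain rfl : w = y := by
    let C := mkEvent (Circle.exp a) (Circle.exp u) hxu
    let B' := mkEvent (Circle.exp z) (Circle.exp w) hzw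
    refine (strictAntiOn_time_proj_exp_sub h2 h3 h4 ht1 ht2 ht4a haz hu hA
      (C := C) rfl).injOn hwzu ⟨hzy, hyu⟩ ?_
    have h6 := ht6 e _ _ _ _ _ he hw hD A B' (hA.trans Sym2.eq_swap) rfl
    rw [time_comm_of_mem_line h3 ht3
      (proj_spec h4 (exp_notMem_eventPts hA haz (by linarith) hu)).1
      (proj_spec h4 (exp_notMem_eventPts hA haz hwzu.1 (by linarith [hwzu.2]))).1] at h6
    rw [h6, hH, time_proj_eq_of_nested h3 h4 ht3 ht5 haz hwzu.1 hwzu.2 hu (B := B') (C := C)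
      rfl rfl, time_proj_eq_of_nested h3 h4 ht3 ht5 haz hzy hyu hu hB (C := C) rfl, sub_self,
      sub_self]
  exact (Subtype.ext (hd.trans hw.symm) : d = _) ▸ hD

end Coordinates

variable {M : (Fin 4 → Circle) → Fin 3 → ℝ}

lemma apply_two_eq_zero_iff (hbase : BaseSpec line t M) (hsub : SubMoebius M)
    {x y z u : Circle} (hxy : x ≠ y) (hsep : SeparatesPts x y z u) {A B : Event}
    (hA : A.1 = s(x, z)) (hB : B.1 = s(z, y)) :
    M ![u, x, y, z] 2 = 0 ↔
      t (proj line A y) (proj line A u) = t (proj line B u) (proj line B x) := by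
  obtain ⟨hzx, hzy, hux, huy, hzu⟩ := hsep.ne
  have hq : Injective ![x, z, u, y] :=
    injective_vec4 hzx.symm hux.symm hxy hzu hzy huy
  rw [hsub.apply_eq_neg_apply hq, neg_eq_zero, (hbase _ hq hsep A B hA hB).2.2, sub_eq_zero]
  exact Iff.rfl

lemma apply_two_ne_zero (h2 : AxH2 line) (h3 : AxH3 line) (h4 : AxH4 line) (ht1 : AxT1 t)
    (ht2 : AxT2 t) (hbase : BaseSpec line t M) (hsub : SubMoebius M) {x y z u : Circle}
    (hxz : x ≠ z) (hsep : SeparatesPts x z y u) : M ![u, x, y, z] 2 ≠ 0 := by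
  obtain ⟨hyx, hyz, hux, huz, hyu⟩ := hsep.ne
  have hq : Injective ![x, y, u, z] := injective_vec4 hyx.symm hux.symm hxz hyu hyz huz
  rw [hsub.apply_eq_apply_zero hq,
    (hbase _ hq hsep (mkEvent x y hyx.symm) (mkEvent y z hyz) rfl rfl).1, neg_ne_zero]
  exact (time_proj_pos h2 h3 h4 ht1 ht2 rfl (notMem_eventPts rfl hxz.symm hyz.symm)
    (notMem_eventPts rfl hux hyu.symm) huz.symm hsep.not_swap_mid).ne'

lemma mapHarmonic_of_mem_line (h2 : AxH2 line) (h3 : AxH3 line) (h4 : AxH4 line)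
    (ht3 : AxT3 t) (ht6 : AxT6 line t) (hbase : BaseSpec line t M) (hsub : SubMoebius M)
    {d e : Event} (hde : d ∈ line e) : MapHarmonic M d e := by
  obtain ⟨x, y, z, u, hd, he, hsep⟩ := h2 e d hde
  have hxy := ne_of_event_eq hd
  obtain ⟨hzx, hzy, hux, huy, hzu⟩ := hsep.ne
  refine ⟨x, y, z, u, hd, he, injective_vec4 hux huy hzu.symm hxy hzx.symm hzy.symm, ?_⟩
  let A := mkEvent x z hzx.symm
  let B := mkEvent z y hzy
  rw [apply_two_eq_zero_iff hbase hsub hxy hsep (A := A) (B := B) rfl rfl,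
    time_comm_of_mem_line h3 ht3 (proj_spec h4 (notMem_eventPts rfl hxy.symm hzy.symm)).1
      (proj_spec h4 (notMem_eventPts rfl hux hzu.symm)).1]
  exact ht6 e d z u x y he hd hde A B Sym2.eq_swap rfl

lemma mem_line_of_apply_two_eq_zero (h2 : AxH2 line) (h3 : AxH3 line) (h4 : AxH4 line)
    (ht1 : AxT1 t) (ht2 : AxT2 t) (ht3 : AxT3 t) (ht4a : AxT4a line t) (ht5 : AxT5 line t)
    (ht6 : AxT6 line t) (hbase : BaseSpec line t M) (hsub : SubMoebius M) {a z y u : ℝ}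
    (haz : a < z) (hzy : z < y) (hyu : y < u) (hu : u < a + 2 * π)
    (hM : M ![Circle.exp u, Circle.exp a, Circle.exp y, Circle.exp z] 2 = 0) {d e : Event}
    (hd : d.1 = s(Circle.exp a, Circle.exp y)) (he : e.1 = s(Circle.exp z, Circle.exp u)) :
    d ∈ line e :=
  mem_line_of_time_eq h2 h3 h4 ht1 ht2 ht3 ht4a ht5 ht6 haz hzy hyu hu
    (A := mkEvent _ _ (exp_ne_exp_of_lt haz (by linarith)))
    (B := mkEvent _ _ (exp_ne_exp_of_lt hzy (by linarith))) rfl rfl he hd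
    ((apply_two_eq_zero_iff hbase hsub (exp_ne_exp_of_lt (by linarith) (by linarith))
      (separatesPts_exp_of_lt haz hzy hyu hu) rfl rfl).mp hM)

lemma mem_line_of_mapHarmonic (h2 : AxH2 line) (h3 : AxH3 line) (h4 : AxH4 line)
    (ht1 : AxT1 t) (ht2 : AxT2 t) (ht3 : AxT3 t) (ht4a : AxT4a line t) (ht5 : AxT5 line t)
    (ht6 : AxT6 line t) (hbase : BaseSpec line t M) (hsub : SubMoebius M) {d e : Event}
    (hde : MapHarmonic M d e) : d ∈ line e := by
  obtain ⟨x, y, z, u, hd, he, hq, hM⟩ := hde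
  have hM' : M ![z, x, y, u] 2 = 0 := by rw [hsub.apply_swap hq, hM, neg_zero]
  have hux : u ≠ x := hq.ne (by decide : (0 : Fin 4) ≠ 1)
  have huy : u ≠ y := hq.ne (by decide : (0 : Fin 4) ≠ 2)
  have huz : u ≠ z := hq.ne (by decide : (0 : Fin 4) ≠ 3)
  have hxy : x ≠ y := hq.ne (by decide : (1 : Fin 4) ≠ 2)
  have hxz : x ≠ z := hq.ne (by decide : (1 : Fin 4) ≠ 3)
  have hyz : y ≠ z := hq.ne (by decide : (2 : Fin 4) ≠ 3)
  rcases SeparatesPts.trichotomy hxy hxz hux.symm hyz huy.symm huz.symm with hsep | hsep | hsep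
  · obtain ⟨a, b, c, v, rfl, rfl, rfl, rfl, hb, hc, hv⟩ :=
      exists_exp_coords hxy hxz hux.symm
    rcases (separatesPts_exp_iff hb hc hv (ne_of_apply_ne _ hyz.symm)
      (ne_of_apply_ne _ huy)).mp hsep with h | h
    · exact mem_line_of_apply_two_eq_zero h2 h3 h4 ht1 ht2 ht3 ht4a ht5 ht6 hbase hsub
        hc.1 h.1 h.2 hv.2 hM hd he
    · exact mem_line_of_apply_two_eq_zero h2 h3 h4 ht1 ht2 ht3 ht4a ht5 ht6 hbase hsub
        hv.1 h.1 h.2 hc.2 hM' hd (he.trans Sym2.eq_swap)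
  · exact absurd hM (apply_two_ne_zero h2 h3 h4 ht1 ht2 hbase hsub hxz hsep)
  · exact absurd hM' (apply_two_ne_zero h2 h3 h4 ht1 ht2 hbase hsub hux.symm hsep)

end TimedCausalSpace

theorem stmt10_general (line : Event → Set Event) (t : Event → Event → ℝ)
    (h2 : AxH2 line) (h3 : AxH3 line) (h4 : AxH4 line)
    (ht1 : AxT1 t) (ht2 : AxT2 t) (ht3 : AxT3 t) (ht4a : AxT4a line t)
    (ht5 : AxT5 line t) (ht6 : AxT6 line t)
    (M : (Fin 4 → Circle) → Fin 3 → ℝ)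
    (hbase : BaseSpec line t M) (hsub : SubMoebius M) :
    ∀ e a : Event, a ∈ line e ↔ MapHarmonic M a e :=
  fun _ _ => ⟨mapHarmonic_of_mem_line h2 h3 h4 ht3 ht6 hbase hsub,
    mem_line_of_mapHarmonic h2 h3 h4 ht1 ht2 ht3 ht4a ht5 ht6 hbase hsub⟩

/-- for a timed causal space `T` with associated Möbius structure
`M = M̂(T)`, an event `d` lies on the timelike line `h_e` iff the pair `(d, e)` is
`M`-harmonic. -/
theorem stmt10 (line : Event → Set Event) (t : Event → Event → ℝ)
    (h1 : AxH1 (Set.range line) line) (h2 : AxH2 line) (h3 : AxH3 line)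
    (h4 : AxH4 line) (h5 : AxH5 line) (h6 : AxH6 line)
    (ht1 : AxT1 t) (ht2 : AxT2 t) (ht3 : AxT3 t) (ht4a : AxT4a line t)
    (ht4b : AxT4b line t) (ht5 : AxT5 line t) (ht6 : AxT6 line t)
    (M : (Fin 4 → Circle) → Fin 3 → ℝ)
    (hbase : BaseSpec line t M) (hsub : SubMoebius M) :
    ∀ e a : Event, a ∈ line e ↔ MapHarmonic M a e :=
  stmt10_general line t h2 h3 h4 ht1 ht2 ht3 ht4a ht5 ht6 M hbase hsub

end Paper
end
end

section
/- For every d > 0 and every ε > 0 there exist δ > 0 and T > 0 with the following property: for any triangle with vertices x, y, z in the Euclidean plane ℝ² such that dist(y,z) ≤ d, dist(x,y) ≥ T, dist(x,z) ≥ T, and the angle of the triangle at z (between the segments zx and zy) and the angle at y (between yx and yz) are both at least π/2 − δ, one has |dist(x,y) − dist(x,z)| ≤ ε. -/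
/-!
By the law of cosines at `z`,
`|xz|² - |xy|² = 2 |xz| |yz| cos ∠xzy - |yz|² ≤ 2 |xz| |yz| cos ∠xzy`, and dividing by
`|xz| + |xy|` gives `|xz| - |xy| ≤ 2 |yz| cos ∠xzy`; symmetrically at `y`. An angle of at
least `π/2 - δ` has cosine at most `δ`, so `||xy| - |xz|| ≤ 2 d δ`, and `δ = ε / (2d)` works
(already with `T = 1`).
-/

open EuclideanGeometry Real

theorem cos_le_of_pi_div_two_sub_le {θ δ : ℝ} (hδ : 0 ≤ δ) (hθ : π / 2 - δ ≤ θ)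
    (hθπ : θ ≤ π) : cos θ ≤ δ := by
  rw [← sin_pi_div_two_sub]
  rcases le_total 0 (π / 2 - θ) with h | h
  · exact (sin_le h).trans (by linarith)
  · exact (sin_nonpos_of_nonpos_of_neg_pi_le h (by linarith)).trans hδ

theorem dist_sub_dist_le_of_cos_angle_le {V P : Type*} [NormedAddCommGroup V]
    [InnerProductSpace ℝ V] [MetricSpace P] [NormedAddTorsor V P] {x y z : P} {c : ℝ}
    (hc : 0 ≤ c) (hcos : cos (∠ x z y) ≤ c) : dist x z - dist x y ≤ 2 * c * dist y z := by
  have hyz := dist_nonneg (x := y) (y := z)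
  rcases le_or_gt (dist x z) (dist x y) with hle | hlt
  · exact (sub_nonpos.2 hle).trans (by positivity)
  have hxy := dist_nonneg (x := x) (y := y)
  have hsum : 0 < dist x z + dist x y := by linarith
  have hcosine : dist x z ^ 2 - dist x y ^ 2 ≤ 2 * c * dist y z * dist x z := by
    have hxzyz : 0 ≤ dist x z * dist y z := by positivity
    nlinarith [law_cos x z y, mul_le_mul_of_nonneg_left hcos hxzyz]
  refine le_of_mul_le_mul_right (a := dist x z + dist x y) ?_ hsum
  nlinarith [mul_nonneg (mul_nonneg hc hyz) hxy]

/-- for every `d > 0` and `ε > 0` there are `δ > 0` and `T > 0` such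
that every Euclidean triangle `x y z` with `dist y z ≤ d`, `dist x y ≥ T`,
`dist x z ≥ T`, whose angles at `z` and at `y` are at least `π/2 − δ`, satisfies
`|dist x y − dist x z| ≤ ε`. -/
theorem stmt18 (d ε : ℝ) (hd : 0 < d) (hε : 0 < ε) :
    ∃ δ T : ℝ, 0 < δ ∧ 0 < T ∧
      ∀ x y z : EuclideanSpace ℝ (Fin 2),
        dist y z ≤ d → T ≤ dist x y → T ≤ dist x z →
        Real.pi / 2 - δ ≤ EuclideanGeometry.angle x z y →
        Real.pi / 2 - δ ≤ EuclideanGeometry.angle x y z →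
        |dist x y - dist x z| ≤ ε := by
  refine ⟨ε / (2 * d), 1, by positivity, one_pos, fun x y z hyz _ _ hz hy => ?_⟩
  have hδ : 0 ≤ ε / (2 * d) := by positivity
  have hcz := cos_le_of_pi_div_two_sub_le hδ hz (angle_le_pi _ _ _)
  have hcy := cos_le_of_pi_div_two_sub_le hδ hy (angle_le_pi _ _ _)
  have hbound : 2 * (ε / (2 * d)) * dist y z ≤ ε := by
    calc 2 * (ε / (2 * d)) * dist y z ≤ 2 * (ε / (2 * d)) * d := by gcongr
      _ = ε := by field_simp
  have hatZ := dist_sub_dist_le_of_cos_angle_le hδ hcz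
  have hatY := dist_sub_dist_le_of_cos_angle_le hδ hcy
  rw [dist_comm z y] at hatY
  exact abs_sub_le_iff.2 ⟨by linarith, by linarith⟩
end
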